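/- Let 𝔤 be a complex semisimple Lie algebra whose grading determined by a nonempty subset Σ of the simple roots is of Monge type, with dim 𝔤₋₁ > 2, let 𝔶 ⊆ 𝔤₋₁ be the codimension-1 abelian subalgebra and 𝔵 a 1-dimensional 𝔤₀-invariant complement of 𝔶 in 𝔤₋₁. Then there exist a unique simple root ζ ∈ Σ and roots β₁, …, β_d of Σ-height 1 such that 𝔵 = 𝔤_{−ζ} and 𝔶 = 𝔤_{−β₁} ⊕ 𝔤_{−β₂} ⊕ ⋯ ⊕ 𝔤_{−β_d}, where 𝔤_{−β} denotes the root space of −β. -/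

import Mathlib

open scoped RealInnerProductSpace BigOperators Classical

/-- A reduced crystallographic root system in a real inner product space,
together with a chosen base of simple roots and the coordinates of each
root with respect to the base. -/
structure RootSystemBase (V : Type*) [NormedAddCommGroup V] [InnerProductSpace ℝ V] where
  /-- the set of roots -/
  Δ : Finset V
  /-- the set of simple roots (the base) -/
  Δ0 : Finset V
  base_sub : Δ0 ⊆ Δ
  ne_zero : ∀ β ∈ Δ, β ≠ (0 : V)
  indep : LinearIndependent ℝ (fun a : ↥Δ0 => (a : V))
  neg_mem : ∀ β ∈ Δ, -β ∈ Δ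
  /-- `coeff β α` is the coefficient `n_α` of the simple root `α` in `β = ∑ n_α • α` -/
  coeff : V → V → ℤ
  coeff_spec : ∀ β ∈ Δ, β = ∑ α ∈ Δ0, (coeff β α : ℝ) • α
  coeff_sign : ∀ β ∈ Δ, (∀ α ∈ Δ0, 0 ≤ coeff β α) ∨ (∀ α ∈ Δ0, coeff β α ≤ 0)
  crystal : ∀ α ∈ Δ, ∀ β ∈ Δ, ∃ k : ℤ, 2 * ⟪β, α⟫ / ⟪α, α⟫ = (k : ℝ)
  reflect_mem : ∀ α ∈ Δ, ∀ β ∈ Δ, β - (2 * ⟪β, α⟫ / ⟪α, α⟫) • α ∈ Δ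
  reduced : ∀ α ∈ Δ, (2 : ℝ) • α ∉ Δ

namespace RootSystemBase

variable {V : Type*} [NormedAddCommGroup V] [InnerProductSpace ℝ V]

variable (R : RootSystemBase V)

/-- The height `ht_Σ(β)` of a root `β` relative to a subset `Sg` of the simple roots. -/
def ht (Sg : Finset V) (β : V) : ℤ := ∑ α ∈ Sg, R.coeff β α

/-- positive roots -/
def IsPos (β : V) : Prop := β ∈ R.Δ ∧ ∀ α ∈ R.Δ0, 0 ≤ R.coeff β α

/-- negative roots -/
def IsNeg (β : V) : Prop := β ∈ R.Δ ∧ ∀ α ∈ R.Δ0, R.coeff β α ≤ 0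

/-- Irreducibility of the root system (the Dynkin diagram is connected); this is
equivalent to the corresponding complex Lie algebra being simple. -/
def Irred : Prop :=
  ¬ ∃ S : Finset V, S ⊆ R.Δ0 ∧ S.Nonempty ∧ S ≠ R.Δ0 ∧
      ∀ a ∈ S, ∀ b ∈ R.Δ0, b ∉ S → ⟪a, b⟫ = 0

/-- Adjacency of two (simple) roots in the Dynkin diagram. -/
def Adj (a b : V) : Prop := a ≠ b ∧ ⟪a, b⟫ ≠ 0

end RootSystemBase

/-- The root space decomposition data of a complex semisimple Lie algebra `L` with
root system `base`: a Cartan subalgebra `H`, one-dimensional root spaces `rs β`,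
and the standard bracket relations among them. -/
structure GradedLieData (V : Type*) [NormedAddCommGroup V] [InnerProductSpace ℝ V]
    (L : Type*) [LieRing L] [LieAlgebra ℂ L] where
  /-- the underlying root system with base -/
  base : RootSystemBase V
  /-- the Cartan subalgebra -/
  H : Submodule ℂ L
  /-- the root spaces -/
  rs : V → Submodule ℂ L
  rs_dim : ∀ β ∈ base.Δ, Module.finrank ℂ ↥(rs β) = 1
  rs_bot : ∀ v : V, v ∉ base.Δ → rs v = ⊥
  sup_eq_top : H ⊔ (⨆ β ∈ base.Δ, rs β) = ⊤
  h_indep : Disjoint H (⨆ β ∈ base.Δ, rs β)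
  rs_indep : ∀ β ∈ base.Δ, Disjoint (rs β) (H ⊔ ⨆ γ ∈ base.Δ.erase β, rs γ)
  /-- `toH v` is the element of the Cartan subalgebra representing `v` via the Killing
  form -/
  toH : V → L
  toH_mem : ∀ v : V, toH v ∈ H
  toH_add : ∀ u v : V, toH (u + v) = toH u + toH v
  H_span : H = Submodule.span ℂ (toH '' ↑base.Δ0)
  br_toH : ∀ v : V, ∀ β ∈ base.Δ, ∀ x ∈ rs β, ⁅toH v, x⁆ = ((⟪β, v⟫ : ℝ) : ℂ) • x
  br_h_h : ∀ h ∈ H, ∀ h' ∈ H, ⁅h, h'⁆ = (0 : L)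
  br_h_rs : ∀ β ∈ base.Δ, ∀ h ∈ H, ∀ x ∈ rs β, ⁅h, x⁆ ∈ rs β
  br_rs_mem : ∀ β ∈ base.Δ, ∀ γ ∈ base.Δ, β + γ ∈ base.Δ →
      ∀ x ∈ rs β, ∀ y ∈ rs γ, ⁅x, y⁆ ∈ rs (β + γ)
  br_rs_zero : ∀ β ∈ base.Δ, ∀ γ ∈ base.Δ, β + γ ∉ base.Δ → β + γ ≠ 0 →
      ∀ x ∈ rs β, ∀ y ∈ rs γ, ⁅x, y⁆ = (0 : L)
  br_rs_opp : ∀ β ∈ base.Δ, ∀ x ∈ rs β, ∀ y ∈ rs (-β),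
      ⁅x, y⁆ ∈ Submodule.span ℂ ({toH β} : Set L)
  br_nondeg : ∀ β ∈ base.Δ, ∀ γ ∈ base.Δ, β + γ ∈ base.Δ →
      ∀ x ∈ rs β, ∀ y ∈ rs γ, ⁅x, y⁆ = (0 : L) → x = 0 ∨ y = 0

namespace GradedLieData

variable {V : Type*} [NormedAddCommGroup V] [InnerProductSpace ℝ V]
variable {L : Type*} [LieRing L] [LieAlgebra ℂ L]

variable (G : GradedLieData V L)

/-- The grading component `𝔤ⱼ` of the grading of `L` determined by the subset `Sg`
of the simple roots. -/
def g (Sg : Finset V) (j : ℤ) : Submodule ℂ L :=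
  if j = 0 then G.H ⊔ ⨆ β ∈ G.base.Δ.filter (fun β => G.base.ht Sg β = 0), G.rs β
  else ⨆ β ∈ G.base.Δ.filter (fun β => G.base.ht Sg β = j), G.rs β

/-- The grading of `L` determined by `Sg` is of *Monge type*: the component `𝔤₋₁`
contains a nonzero abelian subalgebra `Y` of codimension one with
`dim 𝔤₋₂ = dim Y`. -/
def Monge (Sg : Finset V) : Prop :=
  ∃ Y : Submodule ℂ L, Y ≤ G.g Sg (-1) ∧ Y ≠ ⊥ ∧
    (∀ a ∈ Y, ∀ b ∈ Y, ⁅a, b⁆ = (0 : L)) ∧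
    Module.finrank ℂ ↥Y + 1 = Module.finrank ℂ ↥(G.g Sg (-1)) ∧
    Module.finrank ℂ ↥(G.g Sg (-2)) = Module.finrank ℂ ↥Y

end GradedLieData

/-
Fix generators `e_β` of the root spaces. The line `𝔵` is stable under `𝔥 ⊆ 𝔤₀`, so a spanning
vector of `𝔵` is a common eigenvector of `ad 𝔥` and `𝔵 = 𝔤_{β₀}` for one root `β₀` of height
`-1`. Stability under the root spaces of `𝔤₀` says that `η + β₀` is not a root for any root `η`
of height `0`, and this forces `ζ = -β₀` to be a simple root.

Every root of height `2` is a sum of two roots of height `1`, so `𝔤₋₂ = [𝔤₋₁, 𝔤₋₁]`, which is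
`ad(e_{β₀}) 𝔶` because `𝔶` is abelian; since `dim 𝔤₋₂ = dim 𝔶`, `ad(e_{β₀})` is injective on `𝔶`.
For any other root `γ` of height `-1` write `e_γ = c e_{β₀} + y` with `y ∈ 𝔶`: injectivity gives
`[e_{β₀}, e_γ] ≠ 0`, and for a third such root `γ'` the `𝔤_{β₀+γ'}`-component of the relation
`[y, y'] = 0` is `-c [e_{β₀}, e_{γ'}]`, so `c = 0`. Thus `𝔶` contains the root spaces of the
roots of height `-1` other than `β₀`, and equals their sum by counting dimensions.
-/

theorem inner_pos_or_inner_neg_of_sub_eq_add {V : Type*} [NormedAddCommGroup V]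
    [InnerProductSpace ℝ V] {γ α β δ : V} (h : γ - α = β + δ) (hne : β + δ ≠ 0) :
    0 < ⟪γ, β⟫ ∨ 0 < ⟪γ, δ⟫ ∨ ⟪α, β⟫ < 0 ∨ ⟪α, δ⟫ < 0 := by
  by_contra! hcon
  have hpos : 0 < ⟪β + δ, β + δ⟫ := real_inner_self_pos.mpr hne
  have hγ : ⟪γ, β⟫ + ⟪γ, δ⟫ = ⟪β + δ, β + δ⟫ + (⟪α, β⟫ + ⟪α, δ⟫) := by
    rw [← inner_add_right, ← inner_add_right, ← inner_add_left, ← h, sub_add_cancel]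
  linarith [hcon.1, hcon.2.1, hcon.2.2.1, hcon.2.2.2]

namespace RootSystemBase

variable {V : Type*} [NormedAddCommGroup V] [InnerProductSpace ℝ V] (R : RootSystemBase V)

theorem coeff_eq_of_eq_sum {β : V} (hβ : β ∈ R.Δ) {c : V → ℤ}
    (h : β = ∑ α ∈ R.Δ0, (c α : ℝ) • α) {α : V} (hα : α ∈ R.Δ0) : R.coeff β α = c α := by
  have hsum : ∑ α ∈ R.Δ0, ((R.coeff β α : ℝ) - c α) • id α = 0 := by
    simp only [id, sub_smul, Finset.sum_sub_distrib, ← h, ← R.coeff_spec β hβ, sub_self]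
  have hind : LinearIndepOn ℝ id (R.Δ0 : Set V) := R.indep
  exact_mod_cast sub_eq_zero.mp (linearIndepOn_finset_iff.mp hind _ hsum α hα)

theorem coeff_neg {β : V} (hβ : β ∈ R.Δ) {α : V} (hα : α ∈ R.Δ0) :
    R.coeff (-β) α = -R.coeff β α :=
  R.coeff_eq_of_eq_sum (R.neg_mem β hβ) (c := fun α => -R.coeff β α) (by
    conv_lhs => rw [R.coeff_spec β hβ]
    simp only [Int.cast_neg, neg_smul, Finset.sum_neg_distrib]) hα

theorem coeff_add {β γ : V} (hβ : β ∈ R.Δ) (hγ : γ ∈ R.Δ) (hβγ : β + γ ∈ R.Δ) {α : V}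
    (hα : α ∈ R.Δ0) : R.coeff (β + γ) α = R.coeff β α + R.coeff γ α :=
  R.coeff_eq_of_eq_sum hβγ (c := fun α => R.coeff β α + R.coeff γ α) (by
    conv_lhs => rw [R.coeff_spec β hβ, R.coeff_spec γ hγ]
    simp only [Int.cast_add, add_smul, Finset.sum_add_distrib]) hα

theorem coeff_simple {α : V} (hα : α ∈ R.Δ0) {α' : V} (hα' : α' ∈ R.Δ0) :
    R.coeff α α' = if α' = α then 1 else 0 :=
  R.coeff_eq_of_eq_sum (R.base_sub hα) (c := fun α' => if α' = α then 1 else 0) (by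
    simp only [Int.cast_ite, Int.cast_one, Int.cast_zero, ite_smul, one_smul, zero_smul,
      Finset.sum_ite_eq', if_pos hα]) hα'

/-- The roots of `Σ`-height `j`, written `Δ^j_Σ` in the paper. -/
def rootsOfHt (Sg : Finset V) (j : ℤ) : Finset V :=
  R.Δ.filter (fun β => R.ht Sg β = j)

variable {R} {Sg : Finset V}

theorem mem_rootsOfHt {j : ℤ} {β : V} : β ∈ R.rootsOfHt Sg j ↔ β ∈ R.Δ ∧ R.ht Sg β = j :=
  Finset.mem_filter

theorem rootsOfHt_subset (j : ℤ) : R.rootsOfHt Sg j ⊆ R.Δ := Finset.filter_subset _ _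

theorem ht_neg (hSg : Sg ⊆ R.Δ0) {β : V} (hβ : β ∈ R.Δ) : R.ht Sg (-β) = -R.ht Sg β := by
  simp only [ht, ← Finset.sum_neg_distrib]
  exact Finset.sum_congr rfl fun α hα => R.coeff_neg hβ (hSg hα)

theorem ht_add (hSg : Sg ⊆ R.Δ0) {β γ : V} (hβ : β ∈ R.Δ) (hγ : γ ∈ R.Δ)
    (hβγ : β + γ ∈ R.Δ) : R.ht Sg (β + γ) = R.ht Sg β + R.ht Sg γ := by
  simp only [ht, ← Finset.sum_add_distrib]
  exact Finset.sum_congr rfl fun α hα => R.coeff_add hβ hγ hβγ (hSg hα)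

theorem ht_sub (hSg : Sg ⊆ R.Δ0) {β γ : V} (hβ : β ∈ R.Δ) (hγ : γ ∈ R.Δ)
    (hβγ : β - γ ∈ R.Δ) : R.ht Sg (β - γ) = R.ht Sg β - R.ht Sg γ := by
  have h := ht_add hSg hβγ hγ (by rwa [sub_add_cancel])
  rw [sub_add_cancel] at h
  omega

theorem ht_simple (hSg : Sg ⊆ R.Δ0) {α : V} (hα : α ∈ R.Δ0) :
    R.ht Sg α = if α ∈ Sg then 1 else 0 := by
  rw [ht, Finset.sum_congr rfl fun α' hα' => R.coeff_simple hα (hSg hα'),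
    Finset.sum_ite_eq']

theorem add_ne_zero_of_ht_neg (hSg : Sg ⊆ R.Δ0) {β γ : V} (hβ : β ∈ R.Δ)
    (hβ' : R.ht Sg β < 0) (hγ' : R.ht Sg γ < 0) : β + γ ≠ 0 := by
  intro h
  have := ht_neg hSg hβ
  rw [← eq_neg_of_add_eq_zero_right h] at this
  omega

theorem coeff_nonneg_of_ht_pos (hSg : Sg ⊆ R.Δ0) {β : V} (hβ : β ∈ R.Δ)
    (h : 0 < R.ht Sg β) {α : V} (hα : α ∈ R.Δ0) : 0 ≤ R.coeff β α := by
  refine (R.coeff_sign β hβ).resolve_right (fun hneg => ?_) α hα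
  have : R.ht Sg β ≤ 0 := Finset.sum_nonpos fun α hα => hneg α (hSg hα)
  omega

theorem ht_le_ht_base (hSg : Sg ⊆ R.Δ0) {β : V} (hβ : β ∈ R.Δ) (h : 0 < R.ht Sg β) :
    R.ht Sg β ≤ R.ht R.Δ0 β :=
  Finset.sum_le_sum_of_subset_of_nonneg hSg fun _ hα _ => coeff_nonneg_of_ht_pos hSg hβ h hα

variable (R)

theorem sub_mem_of_inner_pos {β γ : V} (hβ : β ∈ R.Δ) (hγ : γ ∈ R.Δ) (hne : β ≠ γ)
    (hpos : 0 < ⟪β, γ⟫) : β - γ ∈ R.Δ := by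
  obtain ⟨k, hk⟩ := R.crystal γ hγ β hβ
  obtain ⟨l, hl⟩ := R.crystal β hβ γ hγ
  have hpos' : 0 < ⟪γ, β⟫ := by rwa [real_inner_comm]
  have hββ : 0 < ⟪β, β⟫ := real_inner_self_pos.mpr (R.ne_zero β hβ)
  have hγγ : 0 < ⟪γ, γ⟫ := real_inner_self_pos.mpr (R.ne_zero γ hγ)
  have hk1 : 0 < k := (Int.cast_pos (R := ℝ)).mp (by rw [← hk]; positivity)
  have hl1 : 0 < l := (Int.cast_pos (R := ℝ)).mp (by rw [← hl]; positivity)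
  rcases (show 1 ≤ k by omega).eq_or_lt with rfl | hk2
  · have := R.reflect_mem γ hγ β hβ
    rwa [hk, Int.cast_one, one_smul] at this
  rcases (show 1 ≤ l by omega).eq_or_lt with rfl | hl2
  · have := R.neg_mem _ (R.reflect_mem β hβ γ hγ)
    rwa [hl, Int.cast_one, one_smul, neg_sub] at this
  -- Otherwise both Cartan integers are `≥ 2`, which forces `‖β - γ‖² ≤ 0`.
  have hk2 : (2 : ℝ) ≤ k := by exact_mod_cast hk2
  have hl2 : (2 : ℝ) ≤ l := by exact_mod_cast hl2
  rw [div_eq_iff hγγ.ne'] at hk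
  rw [div_eq_iff hββ.ne', real_inner_comm] at hl
  have hsub : 0 < ⟪β - γ, β - γ⟫ := real_inner_self_pos.mpr (sub_ne_zero.mpr hne)
  rw [real_inner_sub_sub_self] at hsub
  nlinarith

theorem add_mem_of_inner_neg {β γ : V} (hβ : β ∈ R.Δ) (hγ : γ ∈ R.Δ) (hne : β ≠ -γ)
    (hneg : ⟪β, γ⟫ < 0) : β + γ ∈ R.Δ := by
  simpa using R.sub_mem_of_inner_pos hβ (R.neg_mem γ hγ) hne (by rwa [inner_neg_right, neg_pos])

theorem exists_simple_inner_pos {β : V} (hβ : β ∈ R.Δ) (hc : ∀ α ∈ R.Δ0, 0 ≤ R.coeff β α) :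
    ∃ α ∈ R.Δ0, 0 < ⟪β, α⟫ := by
  by_contra! hcon
  have hββ : 0 < ⟪β, β⟫ := real_inner_self_pos.mpr (R.ne_zero β hβ)
  have hexp : ⟪β, β⟫ = ∑ α ∈ R.Δ0, (R.coeff β α : ℝ) * ⟪β, α⟫ :=
    calc ⟪β, β⟫ = ⟪β, ∑ α ∈ R.Δ0, (R.coeff β α : ℝ) • α⟫ := by rw [← R.coeff_spec β hβ]
      _ = _ := by simp only [inner_sum, real_inner_smul_right]
  have : ∑ α ∈ R.Δ0, (R.coeff β α : ℝ) * ⟪β, α⟫ ≤ 0 :=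
    Finset.sum_nonpos fun α hα =>
      mul_nonpos_of_nonneg_of_nonpos (by exact_mod_cast hc α hα) (hcon α hα)
  linarith

variable {R}

theorem exists_add_of_sub_eq_add (hSg : Sg ⊆ R.Δ0) {γ α β δ : V} (hγ : γ ∈ R.Δ)
    (hα : α ∈ R.Δ) (hβ : β ∈ R.Δ) (hδ : δ ∈ R.Δ) (hγα : γ - α ∈ R.Δ) (h : γ - α = β + δ)
    (htγ : R.ht Sg γ = 2) (htα : R.ht Sg α = 0) (htβ : R.ht Sg β = 1) (htδ : R.ht Sg δ = 1) :
    ∃ β' ∈ R.Δ, ∃ δ' ∈ R.Δ, R.ht Sg β' = 1 ∧ R.ht Sg δ' = 1 ∧ γ = β' + δ' := by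
  have hneg {ε : V} (hε : ε ∈ R.Δ) (htε : R.ht Sg ε = 1) : α ≠ -ε := by
    rintro rfl
    rw [ht_neg hSg hε] at htα
    omega
  rcases inner_pos_or_inner_neg_of_sub_eq_add h (h ▸ R.ne_zero _ hγα) with hγβ | hγδ | hαβ | hαδ
  · have hne : γ ≠ β := by rintro rfl; omega
    have hmem := R.sub_mem_of_inner_pos hγ hβ hne hγβ
    exact ⟨β, hβ, γ - β, hmem, htβ, by rw [ht_sub hSg hγ hβ hmem]; omega, by abel⟩
  · have hne : γ ≠ δ := by rintro rfl; omega
    have hmem := R.sub_mem_of_inner_pos hγ hδ hne hγδ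
    exact ⟨γ - δ, hmem, δ, hδ, by rw [ht_sub hSg hγ hδ hmem]; omega, htδ, by abel⟩
  · have hmem := R.add_mem_of_inner_neg hα hβ (hneg hβ htβ) hαβ
    refine ⟨α + β, hmem, δ, hδ, by rw [ht_add hSg hα hβ hmem]; omega, htδ, ?_⟩
    rw [add_assoc, ← h]; abel
  · have hmem := R.add_mem_of_inner_neg hα hδ (hneg hδ htδ) hαδ
    refine ⟨β, hβ, α + δ, hmem, htβ, by rw [ht_add hSg hα hδ hmem]; omega, ?_⟩
    rw [add_left_comm, ← h]; abel

theorem exists_add_of_ht_eq_two (hSg : Sg ⊆ R.Δ0) {γ : V} (hγ : γ ∈ R.Δ)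
    (htγ : R.ht Sg γ = 2) :
    ∃ β ∈ R.Δ, ∃ δ ∈ R.Δ, R.ht Sg β = 1 ∧ R.ht Sg δ = 1 ∧ γ = β + δ := by
  -- induction on the full height `ht_{Δ⁰} γ`, peeling off a simple root at each step
  suffices ∀ n : ℕ, ∀ γ ∈ R.Δ, R.ht R.Δ0 γ ≤ n → R.ht Sg γ = 2 →
      ∃ β ∈ R.Δ, ∃ δ ∈ R.Δ, R.ht Sg β = 1 ∧ R.ht Sg δ = 1 ∧ γ = β + δ from
    this _ γ hγ (Int.self_le_toNat _) htγ
  intro n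
  induction n with
  | zero =>
    intro γ hγ hn htγ
    have := ht_le_ht_base hSg hγ (by omega)
    omega
  | succ n ih =>
    intro γ hγ hn htγ
    have hpos : 0 < R.ht Sg γ := by omega
    obtain ⟨α, hα, hγα⟩ :=
      R.exists_simple_inner_pos hγ fun _ => coeff_nonneg_of_ht_pos hSg hγ hpos
    have htα := ht_simple hSg hα
    have hne : γ ≠ α := by rintro rfl; split_ifs at htα <;> omega
    have hsub := R.sub_mem_of_inner_pos hγ (R.base_sub hα) hne hγα
    have htsub := ht_sub hSg hγ (R.base_sub hα) hsub
    by_cases hαSg : α ∈ Sg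
    · rw [if_pos hαSg] at htα
      exact ⟨α, R.base_sub hα, γ - α, hsub, htα, by omega, by abel⟩
    · rw [if_neg hαSg] at htα
      have hfull : R.ht R.Δ0 (γ - α) = R.ht R.Δ0 γ - 1 := by
        rw [ht_sub subset_rfl hγ (R.base_sub hα) hsub, ht_simple subset_rfl hα, if_pos hα]
      obtain ⟨β, hβ, δ, hδ, htβ, htδ, h⟩ := ih (γ - α) hsub (by omega) (by omega)
      exact exists_add_of_sub_eq_add hSg hγ (R.base_sub hα) hβ hδ hsub h htγ htα htβ htδ

theorem mem_of_ht_eq_one (hSg : Sg ⊆ R.Δ0) {ζ : V} (hζ : ζ ∈ R.Δ) (htζ : R.ht Sg ζ = 1)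
    (hζ' : ∀ η ∈ R.Δ, R.ht Sg η = 0 → η - ζ ∉ R.Δ) : ζ ∈ Sg := by
  obtain ⟨α, hα, hζα⟩ :=
    R.exists_simple_inner_pos hζ fun _ => coeff_nonneg_of_ht_pos hSg hζ (by omega)
  have htα := ht_simple hSg hα
  by_cases hne : ζ = α
  · subst hne
    split_ifs at htα with h
    · exact h
    · omega
  have hsub := R.sub_mem_of_inner_pos hζ (R.base_sub hα) hne hζα
  by_cases hαSg : α ∈ Sg
  · refine absurd ?_ (hζ' (ζ - α) hsub ?_)
    · simpa using R.neg_mem α (R.base_sub hα)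
    · rw [ht_sub hSg hζ (R.base_sub hα) hsub, htζ, htα, if_pos hαSg, sub_self]
  · refine absurd ?_ (hζ' α (R.base_sub hα) (by rw [htα, if_neg hαSg]))
    simpa using R.neg_mem _ hsub

end RootSystemBase

theorem Submodule.ne_bot_of_finrank_eq_one {K M : Type*} [Field K] [AddCommGroup M] [Module K M]
    {S : Submodule K M} (h : Module.finrank K S = 1) : S ≠ ⊥ := by
  rintro rfl
  simp at h

theorem LinearMap.eq_zero_of_le_map_of_finrank_le {K M N : Type*} [Field K] [AddCommGroup M]
    [Module K M] [AddCommGroup N] [Module K N] (f : M →ₗ[K] N) {Y : Submodule K M}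
    [FiniteDimensional K Y] {D : Submodule K N} (hD : D ≤ Y.map f)
    (hdim : Module.finrank K Y ≤ Module.finrank K D) {y : M} (hy : y ∈ Y) (h0 : f y = 0) :
    y = 0 := by
  set φ := f ∘ₗ Y.subtype
  have hrange : LinearMap.range φ = Y.map f := by
    rw [LinearMap.range_comp, Submodule.range_subtype]
  have hker : LinearMap.ker φ = ⊥ := by
    have hrank := φ.finrank_range_add_finrank_ker
    rw [hrange] at hrank
    have := Submodule.finrank_mono hD
    rw [← Submodule.finrank_eq_zero]
    omega
  have hmem : (⟨y, hy⟩ : Y) ∈ LinearMap.ker φ := h0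
  simpa [hker] using hmem

theorem lie_mem_map_ad_of_mem_span_sup {K L : Type*} [CommRing K] [LieRing L] [LieAlgebra K L]
    {Y : Submodule K L} (hY : ∀ a ∈ Y, ∀ b ∈ Y, ⁅a, b⁆ = 0) (e : L) {a b : L}
    (ha : a ∈ (K ∙ e) ⊔ Y) (hb : b ∈ (K ∙ e) ⊔ Y) :
    ⁅a, b⁆ ∈ Y.map (LieAlgebra.ad K L e : L →ₗ[K] L) := by
  obtain ⟨_, hxa, ya, hya, rfl⟩ := Submodule.mem_sup.mp ha
  obtain ⟨_, hxb, yb, hyb, rfl⟩ := Submodule.mem_sup.mp hb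
  obtain ⟨s, rfl⟩ := Submodule.mem_span_singleton.mp hxa
  obtain ⟨t, rfl⟩ := Submodule.mem_span_singleton.mp hxb
  have hexp : ⁅s • e + ya, t • e + yb⁆ = s • ⁅e, yb⁆ - t • ⁅e, ya⁆ := by
    rw [add_lie, lie_add, lie_add, lie_smul, lie_smul, smul_lie, smul_lie, lie_self,
      smul_zero, smul_zero, zero_add, hY ya hya yb hyb, add_zero, ← lie_skew e ya, smul_neg]
    abel
  rw [hexp]
  exact Submodule.sub_mem _ (Submodule.smul_mem _ _ ⟨yb, hyb, rfl⟩)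
    (Submodule.smul_mem _ _ ⟨ya, hya, rfl⟩)

namespace GradedLieData

variable {V : Type*} [NormedAddCommGroup V] [InnerProductSpace ℝ V]
  {L : Type*} [LieRing L] [LieAlgebra ℂ L] (G : GradedLieData V L) {Sg : Finset V}

open RootSystemBase

theorem exists_mem_rs_ne_zero {β : V} (hβ : β ∈ G.base.Δ) : ∃ x ∈ G.rs β, x ≠ 0 :=
  Submodule.exists_mem_ne_zero_of_ne_bot (Submodule.ne_bot_of_finrank_eq_one (G.rs_dim β hβ))

/-- A generator of the root space `𝔤_β`, and `0` when `β` is not a root. -/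
noncomputable def rootVec (β : V) : L :=
  if hβ : β ∈ G.base.Δ then (G.exists_mem_rs_ne_zero hβ).choose else 0

theorem rootVec_mem (β : V) : G.rootVec β ∈ G.rs β := by
  unfold rootVec
  split_ifs with hβ
  · exact (G.exists_mem_rs_ne_zero hβ).choose_spec.1
  · exact Submodule.zero_mem _

theorem rootVec_ne_zero {β : V} (hβ : β ∈ G.base.Δ) : G.rootVec β ≠ 0 := by
  simpa [rootVec, hβ] using (G.exists_mem_rs_ne_zero hβ).choose_spec.2

theorem rs_eq_span_rootVec (β : V) : G.rs β = ℂ ∙ G.rootVec β := by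
  by_cases hβ : β ∈ G.base.Δ
  · exact eq_span_singleton_of_mem_of_finrank_eq_one (G.rs_dim β hβ) (G.rootVec_mem β)
      (G.rootVec_ne_zero hβ)
  · simp [rootVec, hβ, G.rs_bot β hβ]

theorem rs_le_sup_iSup_erase {β γ : V} (h : γ ≠ β) :
    G.rs γ ≤ G.H ⊔ ⨆ δ ∈ G.base.Δ.erase β, G.rs δ := by
  by_cases hγ : γ ∈ G.base.Δ
  · exact le_sup_of_le_right (le_iSup₂_of_le γ (Finset.mem_erase.mpr ⟨h, hγ⟩) le_rfl)
  · simp [G.rs_bot γ hγ]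

theorem disjoint_rs_sup_iSup_erase (β : V) :
    Disjoint (G.rs β) (G.H ⊔ ⨆ δ ∈ G.base.Δ.erase β, G.rs δ) := by
  by_cases hβ : β ∈ G.base.Δ
  · exact G.rs_indep β hβ
  · simp [G.rs_bot β hβ]

theorem disjoint_rs {β γ : V} (h : β ≠ γ) : Disjoint (G.rs β) (G.rs γ) :=
  (G.disjoint_rs_sup_iSup_erase β).mono_right (G.rs_le_sup_iSup_erase h.symm)

theorem eq_of_rs_eq {β γ : V} (hβ : β ∈ G.base.Δ) (h : G.rs β = G.rs γ) : β = γ := by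
  by_contra hne
  have := G.disjoint_rs hne
  rw [← h, disjoint_self] at this
  exact Submodule.ne_bot_of_finrank_eq_one (G.rs_dim β hβ) this

theorem iSupIndep_rs : iSupIndep G.rs :=
  iSupIndep_def.mpr fun β => (G.disjoint_rs_sup_iSup_erase β).mono_right
    (iSup₂_le fun _ h => G.rs_le_sup_iSup_erase h)

theorem linearIndepOn_rootVec : LinearIndepOn ℂ G.rootVec (G.base.Δ : Set V) :=
  (G.iSupIndep_rs.comp Subtype.val_injective).linearIndependent _
    (fun β => G.rootVec_mem β) (fun β => G.rootVec_ne_zero β.2)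

theorem iSup_rs_eq_span (s : Finset V) : ⨆ β ∈ s, G.rs β = Submodule.span ℂ (G.rootVec '' s) := by
  simp only [G.rs_eq_span_rootVec, Set.image_eq_iUnion, Submodule.span_iUnion₂, Finset.mem_coe]

theorem finrank_iSup_rs {s : Finset V} (hs : s ⊆ G.base.Δ) :
    Module.finrank ℂ ↥(⨆ β ∈ s, G.rs β) = s.card := by
  rw [iSup_rs_eq_span, Set.image_eq_range, finrank_span_eq_card (G.linearIndepOn_rootVec.mono hs)]
  simp

theorem lie_toH_rootVec (v β : V) :
    ⁅G.toH v, G.rootVec β⁆ = ((⟪β, v⟫ : ℝ) : ℂ) • G.rootVec β := by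
  by_cases hβ : β ∈ G.base.Δ
  · exact G.br_toH v β hβ _ (G.rootVec_mem β)
  · simp [rootVec, hβ]

theorem lie_mem_rs_add {β γ : V} (hβ : β ∈ G.base.Δ) (hγ : γ ∈ G.base.Δ) (h0 : β + γ ≠ 0)
    {x y : L} (hx : x ∈ G.rs β) (hy : y ∈ G.rs γ) : ⁅x, y⁆ ∈ G.rs (β + γ) := by
  by_cases hβγ : β + γ ∈ G.base.Δ
  · exact G.br_rs_mem β hβ γ hγ hβγ x hx y hy
  · rw [G.br_rs_zero β hβ γ hγ hβγ h0 x hx y hy]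
    exact Submodule.zero_mem _

theorem lie_rootVec_ne_zero {β γ : V} (hβ : β ∈ G.base.Δ) (hγ : γ ∈ G.base.Δ)
    (hβγ : β + γ ∈ G.base.Δ) : ⁅G.rootVec β, G.rootVec γ⁆ ≠ 0 := fun h =>
  (G.br_nondeg β hβ γ hγ hβγ _ (G.rootVec_mem β) _ (G.rootVec_mem γ) h).elim
    (G.rootVec_ne_zero hβ) (G.rootVec_ne_zero hγ)

theorem g_of_ne_zero {j : ℤ} (hj : j ≠ 0) :
    G.g Sg j = ⨆ β ∈ G.base.rootsOfHt Sg j, G.rs β :=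
  if_neg hj

theorem rs_le_g {β : V} {j : ℤ} (hβ : β ∈ G.base.Δ) (h : G.base.ht Sg β = j) :
    G.rs β ≤ G.g Sg j := by
  have hle : G.rs β ≤ ⨆ γ ∈ G.base.rootsOfHt Sg j, G.rs γ :=
    le_iSup₂_of_le β (mem_rootsOfHt.mpr ⟨hβ, h⟩) le_rfl
  unfold g
  split_ifs with hj
  · subst hj
    exact le_sup_of_le_right hle
  · exact hle

theorem toH_mem_g_zero (v : V) : G.toH v ∈ G.g Sg 0 := by
  rw [g, if_pos rfl]
  exact Submodule.mem_sup_left (G.toH_mem v)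

theorem finrank_g {j : ℤ} (hj : j ≠ 0) :
    Module.finrank ℂ ↥(G.g Sg j) = (G.base.rootsOfHt Sg j).card := by
  rw [G.g_of_ne_zero hj]
  exact G.finrank_iSup_rs (rootsOfHt_subset _)

theorem g_neg_two_le (hSg : Sg ⊆ G.base.Δ0) {D : Submodule ℂ L}
    (hD : ∀ a ∈ G.g Sg (-1), ∀ b ∈ G.g Sg (-1), ⁅a, b⁆ ∈ D) : G.g Sg (-2) ≤ D := by
  rw [G.g_of_ne_zero (by norm_num)]
  refine iSup₂_le fun γ hγ => ?_
  obtain ⟨hγΔ, htγ⟩ := mem_rootsOfHt.mp hγ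
  obtain ⟨β, hβ, δ, hδ, htβ, htδ, hsum⟩ := exists_add_of_ht_eq_two hSg
    (G.base.neg_mem γ hγΔ) (by rw [ht_neg hSg hγΔ, htγ]; rfl)
  have hβ' := G.base.neg_mem β hβ
  have hδ' := G.base.neg_mem δ hδ
  rw [show γ = -β + -δ by rw [← neg_add, ← hsum, neg_neg]] at hγΔ ⊢
  rw [eq_span_singleton_of_mem_of_finrank_eq_one (G.rs_dim _ hγΔ)
      (G.br_rs_mem _ hβ' _ hδ' hγΔ _ (G.rootVec_mem _) _ (G.rootVec_mem _))
      (G.lie_rootVec_ne_zero hβ' hδ' hγΔ), Submodule.span_singleton_le_iff_mem]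
  exact hD _ (G.rs_le_g hβ' (by rw [ht_neg hSg hβ, htβ]) (G.rootVec_mem _))
    _ (G.rs_le_g hδ' (by rw [ht_neg hSg hδ, htδ]) (G.rootVec_mem _))

theorem ofReal_inner_eq_of_lie_toH_eq_smul {s : Finset V} (hs : s ⊆ G.base.Δ) {f : V → ℂ}
    {v : V} {c : ℂ}
    (h : ⁅G.toH v, ∑ β ∈ s, f β • G.rootVec β⁆ = c • ∑ β ∈ s, f β • G.rootVec β) {β : V}
    (hβ : β ∈ s) (hfβ : f β ≠ 0) : ((⟪β, v⟫ : ℝ) : ℂ) = c := by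
  have hsum : ∑ γ ∈ s, (f γ * (((⟪γ, v⟫ : ℝ) : ℂ) - c)) • G.rootVec γ = 0 := by
    simp only [lie_sum, lie_smul, lie_toH_rootVec, Finset.smul_sum, smul_smul] at h
    simp only [mul_sub, sub_smul, Finset.sum_sub_distrib, h, mul_comm c, sub_self]
  have := linearIndepOn_finset_iff.mp (G.linearIndepOn_rootVec.mono hs) _ hsum β hβ
  exact sub_eq_zero.mp ((mul_eq_zero.mp this).resolve_left hfβ)

theorem exists_eq_rs_of_finrank_eq_one {s : Finset V} (hs : s ⊆ G.base.Δ)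
    {X : Submodule ℂ L} (hXs : X ≤ ⨆ β ∈ s, G.rs β) (hX : Module.finrank ℂ X = 1)
    (hinv : ∀ v, ∀ x ∈ X, ⁅G.toH v, x⁆ ∈ X) : ∃ β ∈ s, X = G.rs β := by
  obtain ⟨x, hxX, hx0⟩ :=
    Submodule.exists_mem_ne_zero_of_ne_bot (Submodule.ne_bot_of_finrank_eq_one hX)
  have hXx := eq_span_singleton_of_mem_of_finrank_eq_one hX hxX hx0
  obtain ⟨f, rfl⟩ := (Submodule.mem_span_image_finset_iff_exists_fun' ℂ).mp
    (G.iSup_rs_eq_span s ▸ hXs hxX)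
  obtain ⟨β₀, hβ₀, hfβ₀⟩ : ∃ β ∈ s, f β ≠ 0 := by
    by_contra! h
    exact hx0 (Finset.sum_eq_zero fun β hβ => by rw [h β hβ, zero_smul])
  -- `x` is a common eigenvector of the operators `ad (toH v)`, so its support is one root.
  have hsupp : ∀ γ ∈ s, f γ ≠ 0 → γ = β₀ := fun γ hγ hfγ => ext_inner_right ℝ fun v => by
    obtain ⟨c, hc⟩ := Submodule.mem_span_singleton.mp (hXx ▸ hinv v _ hxX)
    exact_mod_cast (G.ofReal_inner_eq_of_lie_toH_eq_smul hs hc.symm hγ hfγ).trans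
      (G.ofReal_inner_eq_of_lie_toH_eq_smul hs hc.symm hβ₀ hfβ₀).symm
  refine ⟨β₀, hβ₀, ?_⟩
  rw [hXx, Finset.sum_eq_single_of_mem β₀ hβ₀ fun γ hγ hne => by
      rw [not_ne_iff.mp (mt (hsupp γ hγ) hne), zero_smul],
    Submodule.span_singleton_smul_eq (isUnit_iff_ne_zero.mpr hfβ₀), G.rs_eq_span_rootVec]

theorem neg_mem_of_lie_mem_rs (hSg : Sg ⊆ G.base.Δ0) {β₀ : V} (hβ₀ : β₀ ∈ G.base.Δ)
    (htβ₀ : G.base.ht Sg β₀ = -1)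
    (hinv : ∀ η ∈ G.base.Δ, G.base.ht Sg η = 0 → ∀ u ∈ G.rs η, ∀ x ∈ G.rs β₀, ⁅u, x⁆ ∈ G.rs β₀) :
    -β₀ ∈ Sg := by
  refine mem_of_ht_eq_one hSg (G.base.neg_mem β₀ hβ₀) (by rw [ht_neg hSg hβ₀, htβ₀]; rfl)
    fun η hη htη hmem => ?_
  rw [sub_neg_eq_add] at hmem
  have hne : η + β₀ ≠ β₀ := fun h => G.base.ne_zero η hη (add_eq_right.mp h)
  exact G.lie_rootVec_ne_zero hη hβ₀ hmem <| Submodule.disjoint_def.mp (G.disjoint_rs hne) _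
    (G.br_rs_mem η hη β₀ hβ₀ hmem _ (G.rootVec_mem η) _ (G.rootVec_mem β₀))
    (hinv η hη htη _ (G.rootVec_mem η) _ (G.rootVec_mem β₀))

variable {β₀ : V} {Y : Submodule ℂ L}

theorem eq_zero_of_lie_rootVec_eq_zero (hSg : Sg ⊆ G.base.Δ0) [FiniteDimensional ℂ Y]
    (hYab : ∀ a ∈ Y, ∀ b ∈ Y, ⁅a, b⁆ = 0) (hXY : G.rs β₀ ⊔ Y = G.g Sg (-1))
    (hYdim : Module.finrank ℂ Y ≤ Module.finrank ℂ ↥(G.g Sg (-2))) {y : L} (hy : y ∈ Y)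
    (h0 : ⁅G.rootVec β₀, y⁆ = 0) : y = 0 := by
  rw [G.rs_eq_span_rootVec] at hXY
  exact LinearMap.eq_zero_of_le_map_of_finrank_le _
    (G.g_neg_two_le hSg fun a ha b hb =>
      lie_mem_map_ad_of_mem_span_sup hYab _ (hXY ▸ ha) (hXY ▸ hb)) hYdim hy h0

theorem exists_sub_smul_rootVec_mem (hXY : G.rs β₀ ⊔ Y = G.g Sg (-1)) {γ : V}
    (hγ : γ ∈ G.base.Δ) (htγ : G.base.ht Sg γ = -1) :
    ∃ c : ℂ, G.rootVec γ - c • G.rootVec β₀ ∈ Y := by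
  have hmem := G.rs_le_g hγ htγ (G.rootVec_mem γ)
  rw [← hXY, G.rs_eq_span_rootVec] at hmem
  obtain ⟨_, hx, y, hy, hsum⟩ := Submodule.mem_sup.mp hmem
  obtain ⟨c, rfl⟩ := Submodule.mem_span_singleton.mp hx
  exact ⟨c, by rwa [← hsum, add_sub_cancel_left]⟩

theorem lie_rootVec_ne_zero_of_sub_smul_mem {γ : V} (hγ : γ ∈ G.base.Δ) (hne : γ ≠ β₀)
    (hinj : ∀ y ∈ Y, ⁅G.rootVec β₀, y⁆ = 0 → y = 0) {c : ℂ}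
    (hc : G.rootVec γ - c • G.rootVec β₀ ∈ Y) : ⁅G.rootVec β₀, G.rootVec γ⁆ ≠ 0 := by
  intro h0
  have hγβ₀ : G.rootVec γ = c • G.rootVec β₀ :=
    sub_eq_zero.mp (hinj _ hc (by rw [lie_sub, lie_smul, lie_self, smul_zero, sub_zero, h0]))
  refine G.rootVec_ne_zero hγ (Submodule.disjoint_def.mp (G.disjoint_rs hne) _
    (G.rootVec_mem γ) ?_)
  rw [hγβ₀]
  exact Submodule.smul_mem _ _ (G.rootVec_mem β₀)

theorem eq_zero_of_lie_sub_smul_eq_zero {γ γ' : V} (hβ₀ : β₀ ∈ G.base.Δ) (hγ : γ ∈ G.base.Δ)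
    (hγ' : γ' ∈ G.base.Δ) (hγβ₀ : γ ≠ β₀) (hγ'γ : γ' ≠ γ) (hγγ' : γ + γ' ≠ 0)
    (hγβ₀' : γ + β₀ ≠ 0) (hβ₀γ' : β₀ + γ' ≠ 0) {c c' : ℂ}
    (h : ⁅G.rootVec γ - c • G.rootVec β₀, G.rootVec γ' - c' • G.rootVec β₀⁆ = 0)
    (hne : ⁅G.rootVec β₀, G.rootVec γ'⁆ ≠ 0) : c = 0 := by
  have hsplit : c • ⁅G.rootVec β₀, G.rootVec γ'⁆ =
      ⁅G.rootVec γ, G.rootVec γ'⁆ - c' • ⁅G.rootVec γ, G.rootVec β₀⁆ := by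
    rw [eq_comm, ← sub_eq_zero, ← h]
    simp only [sub_lie, lie_sub, smul_lie, lie_smul, lie_self, smul_zero, sub_zero]
    abel
  -- The left side lies in `𝔤_{β₀+γ'}`, the right side in `𝔤_{γ+γ'} + 𝔤_{γ+β₀}`.
  have hmem : ⁅G.rootVec γ, G.rootVec γ'⁆ - c' • ⁅G.rootVec γ, G.rootVec β₀⁆ ∈
      G.H ⊔ ⨆ δ ∈ G.base.Δ.erase (β₀ + γ'), G.rs δ :=
    Submodule.sub_mem _
      (G.rs_le_sup_iSup_erase (fun h => hγβ₀ (add_right_cancel h))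
        (G.lie_mem_rs_add hγ hγ' hγγ' (G.rootVec_mem γ) (G.rootVec_mem γ')))
      (Submodule.smul_mem _ _ (G.rs_le_sup_iSup_erase
        (fun h => hγ'γ (add_right_cancel (h.trans (add_comm β₀ γ'))).symm)
        (G.lie_mem_rs_add hγ hβ₀ hγβ₀' (G.rootVec_mem γ) (G.rootVec_mem β₀))))
  rw [← hsplit] at hmem
  have hzero := Submodule.disjoint_def.mp (G.disjoint_rs_sup_iSup_erase (β₀ + γ')) _
    (Submodule.smul_mem _ _
      (G.lie_mem_rs_add hβ₀ hγ' hβ₀γ' (G.rootVec_mem β₀) (G.rootVec_mem γ'))) hmem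
  exact (smul_eq_zero.mp hzero).resolve_right hne

theorem rootVec_mem_of_two_lt_card (hSg : Sg ⊆ G.base.Δ0) (hβ₀ : β₀ ∈ G.base.rootsOfHt Sg (-1))
    (hN : 2 < (G.base.rootsOfHt Sg (-1)).card) (hYab : ∀ a ∈ Y, ∀ b ∈ Y, ⁅a, b⁆ = 0)
    (hXY : G.rs β₀ ⊔ Y = G.g Sg (-1)) (hinj : ∀ y ∈ Y, ⁅G.rootVec β₀, y⁆ = 0 → y = 0) {γ : V}
    (hγ : γ ∈ (G.base.rootsOfHt Sg (-1)).erase β₀) : G.rootVec γ ∈ Y := by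
  have hsum {a b : V} (ha : a ∈ G.base.rootsOfHt Sg (-1)) (hb : b ∈ G.base.rootsOfHt Sg (-1)) :
      a + b ≠ 0 := by
    rw [mem_rootsOfHt] at ha hb
    exact add_ne_zero_of_ht_neg hSg ha.1 (by omega) (by omega)
  obtain ⟨hγβ₀, hγN⟩ := Finset.mem_erase.mp hγ
  obtain ⟨hγΔ, htγ⟩ := mem_rootsOfHt.mp hγN
  obtain ⟨c, hc⟩ := G.exists_sub_smul_rootVec_mem hXY hγΔ htγ
  -- a third root `γ'` of height `-1` pins down the `rootVec β₀`-component of `rootVec γ`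
  obtain ⟨γ', hγ'⟩ : ((G.base.rootsOfHt Sg (-1)).erase β₀ |>.erase γ).Nonempty := by
    rw [← Finset.card_pos, Finset.card_erase_of_mem hγ, Finset.card_erase_of_mem hβ₀]
    omega
  obtain ⟨hγ'γ, hγ'β₀, hγ'N⟩ : γ' ≠ γ ∧ γ' ≠ β₀ ∧ γ' ∈ G.base.rootsOfHt Sg (-1) := by
    simpa using hγ'
  obtain ⟨hγ'Δ, htγ'⟩ := mem_rootsOfHt.mp hγ'N
  obtain ⟨c', hc'⟩ := G.exists_sub_smul_rootVec_mem hXY hγ'Δ htγ'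
  have hc0 := G.eq_zero_of_lie_sub_smul_eq_zero (mem_rootsOfHt.mp hβ₀).1 hγΔ hγ'Δ hγβ₀ hγ'γ
    (hsum hγN hγ'N) (hsum hγN hβ₀) (hsum hβ₀ hγ'N) (hYab _ hc _ hc')
    (G.lie_rootVec_ne_zero_of_sub_smul_mem hγ'Δ hγ'β₀ hinj hc')
  rwa [hc0, zero_smul, sub_zero] at hc

theorem eq_iSup_rs_erase (hSg : Sg ⊆ G.base.Δ0) (hβ₀ : β₀ ∈ G.base.rootsOfHt Sg (-1))
    [FiniteDimensional ℂ Y] (hYab : ∀ a ∈ Y, ∀ b ∈ Y, ⁅a, b⁆ = 0)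
    (hXY : G.rs β₀ ⊔ Y = G.g Sg (-1)) (hdim : 2 < Module.finrank ℂ ↥(G.g Sg (-1)))
    (hYcodim : Module.finrank ℂ ↥Y + 1 = Module.finrank ℂ ↥(G.g Sg (-1)))
    (hYdim : Module.finrank ℂ ↥(G.g Sg (-2)) = Module.finrank ℂ ↥Y) :
    Y = ⨆ β ∈ (G.base.rootsOfHt Sg (-1)).erase β₀, G.rs β := by
  rw [G.finrank_g (by norm_num)] at hdim hYcodim
  refine (Submodule.eq_of_le_of_finrank_le (iSup₂_le fun γ hγ => ?_) ?_).symm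
  · rw [G.rs_eq_span_rootVec, Submodule.span_singleton_le_iff_mem]
    exact G.rootVec_mem_of_two_lt_card hSg hβ₀ hdim hYab hXY
      (fun _ hy => G.eq_zero_of_lie_rootVec_eq_zero hSg hYab hXY hYdim.ge hy) hγ
  · rw [G.finrank_iSup_rs ((Finset.erase_subset _ _).trans (rootsOfHt_subset _)),
      Finset.card_erase_of_mem hβ₀]
    omega

end GradedLieData

theorem statement3_general {V : Type*} [NormedAddCommGroup V] [InnerProductSpace ℝ V]
    {L : Type*} [LieRing L] [LieAlgebra ℂ L]
    (G : GradedLieData V L) (Sg : Finset V) (hSg : Sg ⊆ G.base.Δ0)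
    (hdim : 2 < Module.finrank ℂ ↥(G.g Sg (-1)))
    (Y : Submodule ℂ L)
    (hYab : ∀ a ∈ Y, ∀ b ∈ Y, ⁅a, b⁆ = (0 : L))
    (hYcodim : Module.finrank ℂ ↥Y + 1 = Module.finrank ℂ ↥(G.g Sg (-1)))
    (hYdim : Module.finrank ℂ ↥(G.g Sg (-2)) = Module.finrank ℂ ↥Y)
    (X : Submodule ℂ L) (hXdim : Module.finrank ℂ ↥X = 1)
    (hXinv : ∀ u ∈ G.g Sg 0, ∀ x ∈ X, ⁅u, x⁆ ∈ X)
    (hXY : X ⊔ Y = G.g Sg (-1)) :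
    (∃! ζ : V, ζ ∈ Sg ∧ X = G.rs (-ζ)) ∧
    ∃ B : Finset V, (∀ β ∈ B, β ∈ G.base.Δ ∧ G.base.ht Sg β = 1) ∧
      Y = ⨆ β ∈ B, G.rs (-β) := by
  have : FiniteDimensional ℂ Y := Module.finite_of_finrank_pos (by omega)
  obtain ⟨β₀, hβ₀, rfl⟩ := G.exists_eq_rs_of_finrank_eq_one (RootSystemBase.rootsOfHt_subset _)
    (G.g_of_ne_zero (j := -1) (by norm_num) ▸ hXY ▸ le_sup_left) hXdim
    fun v x hx => hXinv _ (G.toH_mem_g_zero v) x hx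
  obtain ⟨hβ₀Δ, htβ₀⟩ := RootSystemBase.mem_rootsOfHt.mp hβ₀
  have hζ : -β₀ ∈ Sg := G.neg_mem_of_lie_mem_rs hSg hβ₀Δ htβ₀
    fun η hη htη u hu x hx => hXinv u (G.rs_le_g hη htη hu) x hx
  refine ⟨⟨-β₀, ⟨hζ, by rw [neg_neg]⟩, fun ζ hζ' => ?_⟩,
    ((G.base.rootsOfHt Sg (-1)).erase β₀).image Neg.neg, fun β hβ => ?_, ?_⟩
  · exact (neg_eq_iff_eq_neg.mpr (G.eq_of_rs_eq hβ₀Δ hζ'.2)).symm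
  · obtain ⟨γ, hγ, rfl⟩ := Finset.mem_image.mp hβ
    obtain ⟨hγΔ, htγ⟩ := RootSystemBase.mem_rootsOfHt.mp (Finset.mem_of_mem_erase hγ)
    exact ⟨G.base.neg_mem γ hγΔ, by rw [RootSystemBase.ht_neg hSg hγΔ, htγ, neg_neg]⟩
  · rw [G.eq_iSup_rs_erase hSg hβ₀ hYab hXY hdim hYcodim hYdim, Finset.iSup_finset_image]
    simp only [neg_neg]

/-- For a grading of Monge type of a complex semisimple Lie algebra
with `dim 𝔤₋₁ > 2`, with codimension-one abelian subalgebra `Y ⊆ 𝔤₋₁` and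
one-dimensional `𝔤₀`-invariant complement `X`, there are a unique simple root `ζ ∈ Σ`
and (distinct) roots `β₁, …, β_d` of `Σ`-height one such that `X = 𝔤_{-ζ}` and
`Y = 𝔤_{-β₁} ⊕ ⋯ ⊕ 𝔤_{-β_d}`. -/
theorem statement3 {V : Type*} [NormedAddCommGroup V] [InnerProductSpace ℝ V]
    {L : Type*} [LieRing L] [LieAlgebra ℂ L] [FiniteDimensional ℂ L]
    (G : GradedLieData V L) (Sg : Finset V) (hSg : Sg ⊆ G.base.Δ0) (hne : Sg.Nonempty)
    (hdim : 2 < Module.finrank ℂ ↥(G.g Sg (-1)))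
    (Y : Submodule ℂ L) (hY1 : Y ≤ G.g Sg (-1)) (hY0 : Y ≠ ⊥)
    (hYab : ∀ a ∈ Y, ∀ b ∈ Y, ⁅a, b⁆ = (0 : L))
    (hYcodim : Module.finrank ℂ ↥Y + 1 = Module.finrank ℂ ↥(G.g Sg (-1)))
    (hYdim : Module.finrank ℂ ↥(G.g Sg (-2)) = Module.finrank ℂ ↥Y)
    (X : Submodule ℂ L) (hXdim : Module.finrank ℂ ↥X = 1)
    (hXinv : ∀ u ∈ G.g Sg 0, ∀ x ∈ X, ⁅u, x⁆ ∈ X)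
    (hXY : X ⊔ Y = G.g Sg (-1)) (hXY' : X ⊓ Y = ⊥) :
    (∃! ζ : V, ζ ∈ Sg ∧ X = G.rs (-ζ)) ∧
    ∃ B : Finset V, (∀ β ∈ B, β ∈ G.base.Δ ∧ G.base.ht Sg β = 1) ∧
      Y = ⨆ β ∈ B, G.rs (-β) :=
  statement3_general G Sg hSg hdim Y hYab hYcodim hYdim X hXdim hXinv hXY
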